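/- arXiv:math/0701096 — 2 statements merged into one kernel-verified Lean document; each statement's English description precedes it below -/
import Mathlib

section
/- Fix S, T ⊆ [n] with |S| = |T|. Then the set of partitions P_n(S,T) is in bijection with the set of sequences (a₁,…,a_k) where {i₁ < i₂ < ⋯ < i_k} = [n] \ T and 1 ≤ a_r ≤ h(i_r) for each r, with h(i) = |T ∩ {i+1,…,n}| − |S ∩ {i+1,…,n}|; moreover under this bijection the partition corresponding to (a₁,…,a_k) has exactly ∑_{r=1}^k (a_r − 1) 2-crossings. -/
open Finset
open scoped Classical

/-- descents of a list: number of positions i with l_i > l_{i+1} -/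
def desList (l : List ℕ) : ℕ := ((l.zip l.tail).filter (fun p => p.2 < p.1)).length

/-- major index of a list (1-based positions) -/
def majList (l : List ℕ) : ℕ :=
  ∑ i ∈ Finset.range (l.length - 1), if l.getD (i+1) 0 < l.getD i 0 then i + 1 else 0

/-- inversion number of a list -/
def invList (l : List ℕ) : ℕ :=
  ((Finset.range l.length ×ˢ Finset.range l.length).filter
    (fun p => p.1 < p.2 ∧ l.getD p.2 0 < l.getD p.1 0)).card

/-- number of 2-crossings of an arc set -/
def cr2 {α : Type*} [LinearOrder α] (A : Finset (α × α)) : ℕ :=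
  ((A ×ˢ A).filter (fun p => p.1.1 < p.2.1 ∧ p.2.1 < p.1.2 ∧ p.1.2 < p.2.2)).card

/-- the label of an arc: arcs are labeled 1,…,k from right to left by left-hand endpoints -/
def labelArc {α : Type*} [LinearOrder α] (A : Finset (α × α)) (e : α × α) : ℕ :=
  (A.filter (fun f => e.1 < f.1)).card + 1

/-- p-major index of an arc set: process endpoints in decreasing order, maintaining the
sequence σ of (arcs corresponding to) labels; at a left endpoint delete its arc, at a
right endpoint prepend the arc ending there and add the number of descents of the
label sequence σ. -/
noncomputable def pmajArcs {α : Type*} [LinearOrder α] (A : Finset (α × α)) : ℕ :=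
  (((((A.image Prod.fst) ∪ (A.image Prod.snd)).sort (· ≤ ·)).reverse).foldl
    (fun (st : List (α × α) × ℕ) i =>
      let σ₁ := st.1.filter (fun e => e.1 ≠ i)
      let ends := (A.filter (fun e => e.2 = i)).toList
      let σ₂ := ends ++ σ₁
      (σ₂, st.2 + if ends.isEmpty then 0 else desList (σ₂.map (labelArc A))))
    ([], 0)).2

/-- arcs of the standard representation of a partition of [n] = {1,…,n}:
pairs of consecutive elements of a block -/
noncomputable def arcsOf {n : ℕ} (P : Finpartition (Finset.Icc 1 n)) : Finset (ℕ × ℕ) :=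
  ((Finset.Icc 1 n) ×ˢ (Finset.Icc 1 n)).filter (fun e =>
    e.1 < e.2 ∧ ∃ B ∈ P.parts, e.1 ∈ B ∧ e.2 ∈ B ∧ ∀ k ∈ B, e.1 < k → k < e.2 → False)

/-- the set of minimal block elements of a partition of [n] -/
noncomputable def minsetOf {n : ℕ} (P : Finpartition (Finset.Icc 1 n)) : Finset ℕ :=
  (Finset.Icc 1 n).filter (fun i => ∃ B ∈ P.parts, i ∈ B ∧ ∀ j ∈ B, i ≤ j)

/-- the set of maximal block elements of a partition of [n] -/
noncomputable def maxsetOf {n : ℕ} (P : Finpartition (Finset.Icc 1 n)) : Finset ℕ :=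
  (Finset.Icc 1 n).filter (fun i => ∃ B ∈ P.parts, i ∈ B ∧ ∀ j ∈ B, j ≤ i)

noncomputable instance finpartitionFintype (s : Finset ℕ) : Fintype (Finpartition s) := by
  apply Fintype.ofInjective
    (fun P : Finpartition s =>
      (⟨P.parts, by
        simp only [Finset.mem_powerset]
        intro t ht
        exact Finset.mem_powerset.2 (P.le ht)⟩ : {t // t ∈ s.powerset.powerset}))
  intro P Q h
  have : P.parts = Q.parts := congrArg Subtype.val h
  cases P; cases Q; simpa using this

/-- P_n(S,T): partitions of [n] with block minima S and block maxima T -/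
noncomputable def pnST (n : ℕ) (S T : Finset ℕ) : Finset (Finpartition (Finset.Icc 1 n)) :=
  Finset.univ.filter (fun P => minsetOf P = S ∧ maxsetOf P = T)

/-- h(i) = |T ∩ {i+1,…,n}| − |S ∩ {i+1,…,n}| -/
def hST (n : ℕ) (S T : Finset ℕ) (i : ℕ) : ℕ :=
  (T ∩ Finset.Icc (i+1) n).card - (S ∩ Finset.Icc (i+1) n).card

/-!
A partition is determined by its arcs, its blocks being the connected components of the arc
graph, so `P_n(S,T)` is in bijection with the arc sets in which every element of `[n] \ T` starts
exactly one arc and every element of `[n] \ S` ends exactly one arc. Build such an arc set from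
right to left. When the left endpoint `i ∉ T` is reached, the right endpoints in
`{i+1, …, n} \ S` not yet used are exactly the ends of the arcs passing over the gap between `i`
and `i + 1`; there are `h(i)` of them, and the arc from `i` may go to any of them. If it goes to
the `a_i`-th smallest, `(i, j)` say, then the `a_i - 1` smaller ones are the ends `v` of the arcs
`(u, v)` with `u < i < v < j`, i.e. of the 2-crossings whose second arc starts at `i`.
-/


section Rank

variable {α : Type*} [LinearOrder α] {s : Finset α}

lemma Finset.strictMonoOn_card_filter_lt (s : Finset α) :
    StrictMonoOn (fun j => #{x ∈ s | x < j}) s := by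
  intro i hi j _ hij
  refine card_lt_card ((ssubset_iff_of_subset fun x hx => ?_).2 ⟨i, ?_, ?_⟩)
  · simp only [mem_filter] at hx ⊢
    exact ⟨hx.1, hx.2.trans hij⟩
  · exact mem_filter.2 ⟨hi, hij⟩
  · simp

lemma Finset.card_filter_lt_lt_card {j : α} (hj : j ∈ s) : #{x ∈ s | x < j} < #s :=
  card_lt_card (filter_ssubset.2 ⟨j, hj, lt_irrefl j⟩)

lemma Finset.exists_card_filter_lt_eq {r : ℕ} (hr : r < #s) :
    ∃ j ∈ s, #{x ∈ s | x < j} = r :=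
  surjOn_of_injOn_of_card_le (fun j => #{x ∈ s | x < j})
    (fun _ hj => mem_range.2 (card_filter_lt_lt_card hj))
    (s.strictMonoOn_card_filter_lt.injOn) (by rw [card_range]) (mem_range.2 hr)

end Rank

namespace Relation

variable {α : Type*} {r : α → α → Prop} {a b : α}

lemma eqvGen_iff_join (hr : Relator.RightUnique r) :
    EqvGen r a b ↔ Join (ReflTransGen r) a b := by
  have hjoin : Equivalence (Join (ReflTransGen r)) :=
    equivalence_join_reflTransGen fun _ b c hab hac => ⟨b, .refl, by rw [hr hab hac]⟩
  refine ⟨fun h => hjoin.eqvGen_iff.1 (h.mono fun x y hxy => ⟨y, .single hxy, .refl⟩), ?_⟩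
  rintro ⟨c, hac, hbc⟩
  exact EqvGen.trans _ _ _ (EqvGen.reflTransGen_le_eqvGen r _ _ hac)
    (EqvGen.symm _ _ (EqvGen.reflTransGen_le_eqvGen r _ _ hbc))

lemma ReflTransGen.le_of_le [Preorder α] (hle : ∀ x y, r x y → x ≤ y)
    (h : ReflTransGen r a b) : a ≤ b := by
  induction h with
  | refl => exact le_rfl
  | tail _ hbc ih => exact ih.trans (hle _ _ hbc)

lemma reflTransGen_of_eqvGen [PartialOrder α] (hle : ∀ x y, r x y → x ≤ y)
    (hl : Relator.LeftUnique r) (hr : Relator.RightUnique r)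
    (h : EqvGen r a b) (hab : a ≤ b) : ReflTransGen r a b := by
  obtain ⟨c, hac, hbc⟩ := (eqvGen_iff_join hr).1 h
  have hl' : Relator.RightUnique (Function.swap r) := fun _ _ _ h₁ h₂ => hl h₁ h₂
  rcases ReflTransGen.total_of_right_unique hl' (reflTransGen_swap.2 hac)
    (reflTransGen_swap.2 hbc) with hba | hab'
  · rw [le_antisymm hab ((reflTransGen_swap.1 hba).le_of_le hle)]
  · exact reflTransGen_swap.1 hab'

end Relation

lemma Finpartition.ext_part {α : Type*} [DecidableEq α] {s : Finset α} {P Q : Finpartition s}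
    (h : ∀ a ∈ s, P.part a = Q.part a) : P = Q := by
  suffices key : ∀ {P Q : Finpartition s}, (∀ a ∈ s, P.part a = Q.part a) →
      P.parts ⊆ Q.parts from
    Finpartition.ext (key h |>.antisymm (key fun a ha => (h a ha).symm))
  intro P Q h t ht
  obtain ⟨a, ha⟩ := P.nonempty_of_mem_parts ht
  have has : a ∈ s := P.subset ht ha
  rw [← P.part_eq_of_mem ht ha, h a has]
  exact Q.part_mem.2 has

namespace Finpartition

variable {α : Type*} [DecidableEq α] {s : Finset α} {P : Finpartition s} {a b : α}

lemma mem_part_comm : b ∈ P.part a ↔ a ∈ P.part b := by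
  simp only [mem_part_iff_exists, and_comm]

lemma part_eq_part_of_mem (hb : b ∈ P.part a) : P.part a = P.part b :=
  P.part_eq_of_mem (P.part_mem.2 (P.part_subset a hb)) (mem_part_comm.1 hb)

end Finpartition

def IsArc (A : Finset (ℕ × ℕ)) (u v : ℕ) : Prop := (u, v) ∈ A

lemma injOn_fst_of_rightUnique {A : Finset (ℕ × ℕ)} (h : Relator.RightUnique (IsArc A)) :
    Set.InjOn Prod.fst (A : Set (ℕ × ℕ)) := by
  rintro ⟨a, b⟩ he ⟨c, d⟩ hf (rfl : a = c)
  rw [h (b := b) (c := d) he hf]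

lemma injOn_snd_of_leftUnique {A : Finset (ℕ × ℕ)} (h : Relator.LeftUnique (IsArc A)) :
    Set.InjOn Prod.snd (A : Set (ℕ × ℕ)) := by
  rintro ⟨a, b⟩ he ⟨c, d⟩ hf (rfl : b = d)
  rw [h (a := a) (b := c) he hf]

section ArcsOfPartition

variable {n : ℕ} {P : Finpartition (Icc 1 n)} {u v : ℕ}

lemma mem_arcsOf :
    (u, v) ∈ arcsOf P ↔ u < v ∧ v ∈ P.part u ∧ ∀ k ∈ P.part u, ¬(u < k ∧ k < v) := by
  simp only [arcsOf, mem_filter, mem_product]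
  constructor
  · rintro ⟨-, huv, B, hB, huB, hvB, hgap⟩
    rw [P.part_eq_of_mem hB huB]
    exact ⟨huv, hvB, fun k hk h => hgap k hk h.1 h.2⟩
  · rintro ⟨huv, hv, hgap⟩
    have hu : u ∈ Icc 1 n := P.part_nonempty.1 ⟨v, hv⟩
    exact ⟨⟨hu, P.part_subset u hv⟩, huv, P.part u, P.part_mem.2 hu, P.mem_part_self.2 hu, hv,
      fun k hk h₁ h₂ => hgap k hk ⟨h₁, h₂⟩⟩

lemma mem_minsetOf {i : ℕ} : i ∈ minsetOf P ↔ i ∈ Icc 1 n ∧ ∀ j ∈ P.part i, i ≤ j := by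
  simp only [minsetOf, mem_filter]
  refine and_congr_right fun hi => ⟨?_, fun h => ⟨_, P.part_mem.2 hi, P.mem_part_self.2 hi, h⟩⟩
  rintro ⟨B, hB, hiB, h⟩
  rwa [P.part_eq_of_mem hB hiB]

lemma mem_maxsetOf {i : ℕ} : i ∈ maxsetOf P ↔ i ∈ Icc 1 n ∧ ∀ j ∈ P.part i, j ≤ i := by
  simp only [maxsetOf, mem_filter]
  refine and_congr_right fun hi => ⟨?_, fun h => ⟨_, P.part_mem.2 hi, P.mem_part_self.2 hi, h⟩⟩
  rintro ⟨B, hB, hiB, h⟩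
  rwa [P.part_eq_of_mem hB hiB]

lemma exists_mem_arcsOf_le (hv : v ∈ P.part u) (huv : u < v) : ∃ w ≤ v, (u, w) ∈ arcsOf P := by
  have hne : {k ∈ P.part u | u < k}.Nonempty := ⟨v, mem_filter.2 ⟨hv, huv⟩⟩
  obtain ⟨hw, huw⟩ := mem_filter.1 (min'_mem _ hne)
  refine ⟨_, min'_le _ _ (mem_filter.2 ⟨hv, huv⟩), mem_arcsOf.2 ⟨huw, hw, ?_⟩⟩
  rintro k hk ⟨huk, hkw⟩
  exact (min'_le _ k (mem_filter.2 ⟨hk, huk⟩)).not_gt hkw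

lemma exists_mem_arcsOf_ge (hu : u ∈ P.part v) (huv : u < v) : ∃ w ≥ u, (w, v) ∈ arcsOf P := by
  have hne : {k ∈ P.part v | k < v}.Nonempty := ⟨u, mem_filter.2 ⟨hu, huv⟩⟩
  obtain ⟨hw, hwv⟩ := mem_filter.1 (max'_mem _ hne)
  refine ⟨_, le_max' _ _ (mem_filter.2 ⟨hu, huv⟩), mem_arcsOf.2 ⟨hwv, ?_, ?_⟩⟩
  · rw [← Finpartition.part_eq_part_of_mem hw]
    exact P.mem_part_self.2 (P.part_nonempty.1 ⟨u, hu⟩)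
  · rintro k hk ⟨hwk, hkv⟩
    rw [← Finpartition.part_eq_part_of_mem hw] at hk
    exact (le_max' _ k (mem_filter.2 ⟨hk, hkv⟩)).not_gt hwk

lemma part_eq_part_of_mem_arcsOf (h : (u, v) ∈ arcsOf P) : P.part u = P.part v :=
  Finpartition.part_eq_part_of_mem (mem_arcsOf.1 h).2.1

theorem reflTransGen_of_mem_part {a b : ℕ} (hb : b ∈ P.part a) (hab : a ≤ b) :
    Relation.ReflTransGen (IsArc (arcsOf P)) a b := by
  rcases hab.eq_or_lt with rfl | hab
  · exact .refl
  obtain ⟨c, hcb, hac⟩ := exists_mem_arcsOf_le hb hab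
  have := (mem_arcsOf.1 hac).1
  have hbc : b ∈ P.part c := by rwa [← part_eq_part_of_mem_arcsOf hac]
  exact .head hac (reflTransGen_of_mem_part hbc hcb)
termination_by b - a

lemma part_eq_part_of_eqvGen (h : Relation.EqvGen (IsArc (arcsOf P)) u v) :
    P.part u = P.part v := by
  induction h with
  | rel _ _ h => exact part_eq_part_of_mem_arcsOf h
  | refl => rfl
  | symm _ _ _ ih => exact ih.symm
  | trans _ _ _ _ _ ih₁ ih₂ => exact ih₁.trans ih₂

lemma leftUnique_arcsOf (P : Finpartition (Icc 1 n)) : Relator.LeftUnique (IsArc (arcsOf P)) := by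
  intro a b c hac hbc
  obtain ⟨hac, hca, hgap⟩ := mem_arcsOf.1 hac
  obtain ⟨hbc, hcb, hgap'⟩ := mem_arcsOf.1 hbc
  have hab : b ∈ P.part a := by
    rw [Finpartition.part_eq_part_of_mem hca, ← Finpartition.part_eq_part_of_mem hcb]
    exact P.mem_part_self.2 (P.part_nonempty.1 ⟨c, hcb⟩)
  rcases lt_trichotomy a b with h | h | h
  · exact (hgap b hab ⟨h, hbc⟩).elim
  · exact h
  · exact (hgap' a (Finpartition.mem_part_comm.1 hab) ⟨h, hac⟩).elim

lemma rightUnique_arcsOf (P : Finpartition (Icc 1 n)) :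
    Relator.RightUnique (IsArc (arcsOf P)) := by
  intro a b c hab hac
  obtain ⟨hab, hb, hgap⟩ := mem_arcsOf.1 hab
  obtain ⟨hac, hc, hgap'⟩ := mem_arcsOf.1 hac
  rcases lt_trichotomy b c with h | h | h
  · exact (hgap' b hb ⟨hab, h⟩).elim
  · exact h
  · exact (hgap c hc ⟨hac, h⟩).elim

lemma exists_mem_arcsOf_iff_notMem_maxsetOf {i : ℕ} (hi : i ∈ Icc 1 n) :
    (∃ j, (i, j) ∈ arcsOf P) ↔ i ∉ maxsetOf P := by
  simp only [mem_maxsetOf, hi, true_and, not_forall, not_le]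
  constructor
  · rintro ⟨j, hj⟩
    exact ⟨j, (mem_arcsOf.1 hj).2.1, (mem_arcsOf.1 hj).1⟩
  · rintro ⟨j, hj, hij⟩
    obtain ⟨w, -, hw⟩ := exists_mem_arcsOf_le hj hij
    exact ⟨w, hw⟩

lemma exists_mem_arcsOf_iff_notMem_minsetOf {j : ℕ} (hj : j ∈ Icc 1 n) :
    (∃ i, (i, j) ∈ arcsOf P) ↔ j ∉ minsetOf P := by
  simp only [mem_minsetOf, hj, true_and, not_forall, not_le]
  constructor
  · rintro ⟨i, hi⟩
    exact ⟨i, Finpartition.mem_part_comm.1 (mem_arcsOf.1 hi).2.1, (mem_arcsOf.1 hi).1⟩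
  · rintro ⟨i, hi, hij⟩
    obtain ⟨w, -, hw⟩ := exists_mem_arcsOf_ge hi hij
    exact ⟨w, hw⟩

end ArcsOfPartition

noncomputable def partOfArcs (n : ℕ) (A : Finset (ℕ × ℕ)) : Finpartition (Icc 1 n) :=
  Finpartition.ofSetSetoid (Relation.EqvGen.setoid (IsArc A)) (Icc 1 n)

lemma mem_part_partOfArcs {n : ℕ} {A : Finset (ℕ × ℕ)} {a b : ℕ} :
    b ∈ (partOfArcs n A).part a ↔ a ∈ Icc 1 n ∧ b ∈ Icc 1 n ∧ Relation.EqvGen (IsArc A) a b :=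
  Finpartition.mem_part_ofSetSetoid_iff_rel _

theorem partOfArcs_arcsOf {n : ℕ} (P : Finpartition (Icc 1 n)) :
    partOfArcs n (arcsOf P) = P := by
  refine Finpartition.ext_part fun a ha => Finset.ext fun b => ?_
  rw [mem_part_partOfArcs]
  constructor
  · rintro ⟨-, hb, h⟩
    rw [part_eq_part_of_eqvGen h]
    exact P.mem_part_self.2 hb
  · intro hb
    refine ⟨ha, P.part_subset a hb, ?_⟩
    rcases le_total a b with hab | hba
    · exact Relation.EqvGen.reflTransGen_le_eqvGen _ _ _ (reflTransGen_of_mem_part hb hab)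
    · exact .symm _ _ <| Relation.EqvGen.reflTransGen_le_eqvGen _ _ _
        (reflTransGen_of_mem_part (Finpartition.mem_part_comm.1 hb) hba)

/-- The arc sets of the partitions in `pnST n S T`. -/
structure IsArcDiagram (n : ℕ) (S T : Finset ℕ) (A : Finset (ℕ × ℕ)) : Prop where
  fst_mem : ∀ e ∈ A, e.1 ∈ Icc 1 n
  snd_mem : ∀ e ∈ A, e.2 ∈ Icc 1 n
  fst_lt_snd : ∀ e ∈ A, e.1 < e.2
  leftUnique : Relator.LeftUnique (IsArc A)
  rightUnique : Relator.RightUnique (IsArc A)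
  exists_arc_from_iff : ∀ i ∈ Icc 1 n, (∃ j, (i, j) ∈ A) ↔ i ∉ T
  exists_arc_to_iff : ∀ j ∈ Icc 1 n, (∃ i, (i, j) ∈ A) ↔ j ∉ S

section ArcDiagram

variable {n : ℕ} {S T : Finset ℕ} {A : Finset (ℕ × ℕ)} {P : Finpartition (Icc 1 n)}

theorem isArcDiagram_arcsOf (hP : P ∈ pnST n S T) : IsArcDiagram n S T (arcsOf P) := by
  obtain ⟨hmin, hmax⟩ := (mem_filter.1 hP).2
  refine ⟨fun e he => (mem_product.1 (mem_filter.1 he).1).1,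
    fun e he => (mem_product.1 (mem_filter.1 he).1).2, fun e he => (mem_filter.1 he).2.1,
    leftUnique_arcsOf P, rightUnique_arcsOf P, fun i hi => ?_, fun j hj => ?_⟩
  · rw [← hmax, exists_mem_arcsOf_iff_notMem_maxsetOf hi]
  · rw [← hmin, exists_mem_arcsOf_iff_notMem_minsetOf hj]

namespace IsArcDiagram

variable (G : IsArcDiagram n S T A)
include G

lemma reflTransGen_of_eqvGen {a b : ℕ} (h : Relation.EqvGen (IsArc A) a b) (hab : a ≤ b) :
    Relation.ReflTransGen (IsArc A) a b :=
  Relation.reflTransGen_of_eqvGen (fun x y h => (G.fst_lt_snd (x, y) h).le)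
    G.leftUnique G.rightUnique h hab

lemma le_of_reflTransGen {a b : ℕ} (h : Relation.ReflTransGen (IsArc A) a b) : a ≤ b :=
  h.le_of_le fun x y h => (G.fst_lt_snd (x, y) h).le

theorem arcsOf_partOfArcs : arcsOf (partOfArcs n A) = A := by
  ext ⟨u, v⟩
  simp only [mem_arcsOf, mem_part_partOfArcs]
  constructor
  · rintro ⟨huv, ⟨hu, -, h⟩, hgap⟩
    rcases (G.reflTransGen_of_eqvGen h huv.le).cases_head with rfl | ⟨w, huw, hwv⟩
    · exact (lt_irrefl u huv).elim
    rcases (G.le_of_reflTransGen hwv).eq_or_lt with rfl | hwv'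
    · exact huw
    · exact (hgap w ⟨hu, G.snd_mem _ huw, .rel _ _ huw⟩ ⟨G.fst_lt_snd _ huw, hwv'⟩).elim
  · intro huv
    refine ⟨G.fst_lt_snd _ huv, ⟨G.fst_mem _ huv, G.snd_mem _ huv, .rel _ _ huv⟩, ?_⟩
    rintro k ⟨-, -, h⟩ ⟨huk, hkv⟩
    rcases (G.reflTransGen_of_eqvGen h huk.le).cases_head with rfl | ⟨w, huw, hwk⟩
    · exact lt_irrefl u huk
    rw [G.rightUnique huw huv] at hwk
    exact (G.le_of_reflTransGen hwk).not_gt hkv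

theorem minsetOf_partOfArcs (hS : S ⊆ Icc 1 n) : minsetOf (partOfArcs n A) = S := by
  ext i
  simp only [mem_minsetOf, mem_part_partOfArcs]
  constructor
  · rintro ⟨hi, hmin⟩
    by_contra hiS
    obtain ⟨u, hu⟩ := (G.exists_arc_to_iff i hi).2 hiS
    exact (hmin u ⟨hi, G.fst_mem _ hu, .symm _ _ (.rel _ _ hu)⟩).not_gt (G.fst_lt_snd _ hu)
  · intro hiS
    refine ⟨hS hiS, fun j ⟨hi, _, h⟩ => not_lt.1 fun hji => ?_⟩
    rcases (G.reflTransGen_of_eqvGen (.symm _ _ h) hji.le).cases_tail with rfl | ⟨m, -, hmi⟩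
    · exact lt_irrefl i hji
    · exact (G.exists_arc_to_iff i hi).1 ⟨m, hmi⟩ hiS

theorem maxsetOf_partOfArcs (hT : T ⊆ Icc 1 n) : maxsetOf (partOfArcs n A) = T := by
  ext i
  simp only [mem_maxsetOf, mem_part_partOfArcs]
  constructor
  · rintro ⟨hi, hmax⟩
    by_contra hiT
    obtain ⟨v, hv⟩ := (G.exists_arc_from_iff i hi).2 hiT
    exact (hmax v ⟨hi, G.snd_mem _ hv, .rel _ _ hv⟩).not_gt (G.fst_lt_snd _ hv)
  · intro hiT
    refine ⟨hT hiT, fun j ⟨hi, _, h⟩ => not_lt.1 fun hij => ?_⟩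
    rcases (G.reflTransGen_of_eqvGen h hij.le).cases_head with rfl | ⟨m, him, -⟩
    · exact lt_irrefl i hij
    · exact (G.exists_arc_from_iff i hi).1 ⟨m, him⟩ hiT

theorem partOfArcs_mem_pnST (hS : S ⊆ Icc 1 n) (hT : T ⊆ Icc 1 n) :
    partOfArcs n A ∈ pnST n S T :=
  mem_filter.2 ⟨mem_univ _, G.minsetOf_partOfArcs hS, G.maxsetOf_partOfArcs hT⟩

end IsArcDiagram

noncomputable def pnSTEquivArcDiagram (hS : S ⊆ Icc 1 n) (hT : T ⊆ Icc 1 n) :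
    {P // P ∈ pnST n S T} ≃ {A // IsArcDiagram n S T A} where
  toFun P := ⟨arcsOf P.1, isArcDiagram_arcsOf P.2⟩
  invFun A := ⟨partOfArcs n A.1, A.2.partOfArcs_mem_pnST hS hT⟩
  left_inv P := Subtype.ext (partOfArcs_arcsOf P.1)
  right_inv A := Subtype.ext A.2.arcsOf_partOfArcs

end ArcDiagram

noncomputable def crossingsAt (A : Finset (ℕ × ℕ)) (i : ℕ) : ℕ :=
  #{p ∈ A ×ˢ A | (p.1.1 < p.2.1 ∧ p.2.1 < p.1.2 ∧ p.1.2 < p.2.2) ∧ p.2.1 = i}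

def openArcs (A : Finset (ℕ × ℕ)) (i : ℕ) : Finset (ℕ × ℕ) := {e ∈ A | e.1 ≤ i ∧ i < e.2}

lemma openArcs_subset (A : Finset (ℕ × ℕ)) (i : ℕ) : openArcs A i ⊆ A := filter_subset _ _

lemma openArcs_eq_sdiff (A : Finset (ℕ × ℕ)) (i : ℕ) :
    openArcs A i = {e ∈ A | i < e.2} \ {e ∈ A | i < e.1} := by
  ext e
  simp only [openArcs, mem_filter, mem_sdiff, not_and, not_lt]
  tauto

def freeEnds (n : ℕ) (S : Finset ℕ) (A : Finset (ℕ × ℕ)) (i : ℕ) : Finset ℕ :=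
  (Icc (i + 1) n \ S) \ {e ∈ A | i < e.1}.image Prod.snd

noncomputable def arcCode (n : ℕ) (T : Finset ℕ) (A : Finset (ℕ × ℕ)) (i : ℕ) : ℕ :=
  if i ∈ Icc 1 n \ T then crossingsAt A i + 1 else 0

namespace IsArcDiagram

variable {n : ℕ} {S T : Finset ℕ} {A A' : Finset (ℕ × ℕ)} (G : IsArcDiagram n S T A)
include G

lemma injOn_fst : Set.InjOn Prod.fst (A : Set (ℕ × ℕ)) := injOn_fst_of_rightUnique G.rightUnique

lemma injOn_snd : Set.InjOn Prod.snd (A : Set (ℕ × ℕ)) := injOn_snd_of_leftUnique G.leftUnique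

lemma fst_mem_sdiff {e : ℕ × ℕ} (he : e ∈ A) : e.1 ∈ Icc 1 n \ T :=
  mem_sdiff.2 ⟨G.fst_mem e he, (G.exists_arc_from_iff _ (G.fst_mem e he)).1 ⟨e.2, he⟩⟩

theorem cr2_eq_sum_crossingsAt : cr2 A = ∑ i ∈ Icc 1 n \ T, crossingsAt A i := by
  rw [cr2, card_eq_sum_card_fiberwise fun p hp => G.fst_mem_sdiff
    (mem_product.1 (mem_filter.1 hp).1).2]
  simp only [crossingsAt, filter_filter]

lemma image_snd_filter_lt_snd (i : ℕ) : {e ∈ A | i < e.2}.image Prod.snd = Icc (i + 1) n \ S := by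
  ext j
  simp only [mem_image, mem_filter, mem_sdiff, mem_Icc]
  constructor
  · rintro ⟨e, ⟨he, hij⟩, rfl⟩
    exact ⟨⟨hij, (mem_Icc.1 (G.snd_mem e he)).2⟩,
      (G.exists_arc_to_iff _ (G.snd_mem e he)).1 ⟨e.1, he⟩⟩
  · rintro ⟨⟨hij, hjn⟩, hjS⟩
    obtain ⟨u, hu⟩ := (G.exists_arc_to_iff j (mem_Icc.2 ⟨by omega, hjn⟩)).2 hjS
    exact ⟨(u, j), ⟨hu, hij⟩, rfl⟩

lemma image_fst_filter_lt_fst (i : ℕ) : {e ∈ A | i < e.1}.image Prod.fst = Icc (i + 1) n \ T := by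
  ext j
  simp only [mem_image, mem_filter, mem_sdiff, mem_Icc]
  constructor
  · rintro ⟨e, ⟨he, hij⟩, rfl⟩
    exact ⟨⟨hij, (mem_Icc.1 (G.fst_mem e he)).2⟩,
      (G.exists_arc_from_iff _ (G.fst_mem e he)).1 ⟨e.2, he⟩⟩
  · rintro ⟨⟨hij, hjn⟩, hjT⟩
    obtain ⟨v, hv⟩ := (G.exists_arc_from_iff j (mem_Icc.2 ⟨by omega, hjn⟩)).2 hjT
    exact ⟨(j, v), ⟨hv, hij⟩, rfl⟩

lemma filter_lt_fst_subset (i : ℕ) : {e ∈ A | i < e.1} ⊆ {e ∈ A | i < e.2} :=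
  monotone_filter_right _ fun e he h => h.trans (G.fst_lt_snd e he)

/-- Count the arcs ending after `i` by their right endpoints and those starting after `i` by their
left endpoints. -/
theorem card_openArcs (i : ℕ) : #(openArcs A i) = hST n S T i := by
  have hsnd : #{e ∈ A | i < e.2} = #(Icc (i + 1) n \ S) := by
    rw [← G.image_snd_filter_lt_snd, card_image_of_injOn (G.injOn_snd.mono (filter_subset _ _))]
  have hfst : #{e ∈ A | i < e.1} = #(Icc (i + 1) n \ T) := by
    rw [← G.image_fst_filter_lt_fst, card_image_of_injOn (G.injOn_fst.mono (filter_subset _ _))]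
  have hS' := card_sdiff_add_card_inter (Icc (i + 1) n) S
  have hT' := card_sdiff_add_card_inter (Icc (i + 1) n) T
  rw [inter_comm] at hS' hT'
  rw [openArcs_eq_sdiff, card_sdiff_of_subset (G.filter_lt_fst_subset i), hsnd, hfst, hST]
  omega

lemma image_snd_openArcs (i : ℕ) : (openArcs A i).image Prod.snd = freeEnds n S A i := by
  rw [openArcs_eq_sdiff, image_sdiff_of_injOn (G.injOn_snd.mono (filter_subset _ _))
    (G.filter_lt_fst_subset i), G.image_snd_filter_lt_snd, freeEnds]

theorem crossingsAt_eq_card {i j : ℕ} (hij : (i, j) ∈ A) :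
    crossingsAt A i = #{x ∈ freeEnds n S A i | x < j} := by
  rw [← G.image_snd_openArcs, filter_image, card_image_of_injOn
    (G.injOn_snd.mono ((filter_subset _ _).trans (openArcs_subset A i)))]
  apply card_nbij' Prod.fst (fun e => (e, (i, j)))
  · rintro ⟨e, f⟩ hp
    simp only [mem_coe, mem_filter, mem_product] at hp
    obtain ⟨⟨he, hf⟩, ⟨h₁, h₂, h₃⟩, rfl⟩ := hp
    rw [G.injOn_fst hf hij rfl] at h₂ h₃
    exact mem_filter.2 ⟨mem_filter.2 ⟨he, h₁.le, h₂⟩, h₃⟩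
  · intro e he
    simp only [openArcs, mem_coe, mem_filter] at he
    obtain ⟨⟨he, hei, hie⟩, hej⟩ := he
    have hei : e.1 < i := hei.lt_of_ne fun h => hej.ne (congrArg Prod.snd (G.injOn_fst he hij h))
    exact mem_filter.2 ⟨mem_product.2 ⟨he, hij⟩, ⟨hei, hie, hej⟩, rfl⟩
  · rintro ⟨e, f⟩ hp
    simp only [mem_coe, mem_filter, mem_product] at hp
    rw [G.injOn_fst hp.1.2 hij hp.2.2]
  · intro e _
    rfl

lemma card_freeEnds (i : ℕ) : #(freeEnds n S A i) = hST n S T i := by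
  rw [← G.image_snd_openArcs, card_image_of_injOn (G.injOn_snd.mono (openArcs_subset A i)),
    G.card_openArcs]

lemma mem_freeEnds {i j : ℕ} (hij : (i, j) ∈ A) : j ∈ freeEnds n S A i := by
  rw [← G.image_snd_openArcs]
  exact mem_image_of_mem _ (mem_filter.2 ⟨hij, le_rfl, G.fst_lt_snd _ hij⟩)

lemma arcCode_mem_Icc {i : ℕ} (hi : i ∈ Icc 1 n \ T) : arcCode n T A i ∈ Icc 1 (hST n S T i) := by
  obtain ⟨j, hij⟩ := (G.exists_arc_from_iff i (mem_sdiff.1 hi).1).2 (mem_sdiff.1 hi).2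
  have hlt := card_filter_lt_lt_card (G.mem_freeEnds hij)
  rw [G.card_freeEnds] at hlt
  rw [arcCode, if_pos hi, G.crossingsAt_eq_card hij, mem_Icc]
  omega

end IsArcDiagram

namespace IsArcDiagram

variable {n : ℕ} {S T : Finset ℕ} {A A' : Finset (ℕ × ℕ)}

theorem cr2_eq_sum_arcCode_sub_one (G : IsArcDiagram n S T A) :
    cr2 A = ∑ i ∈ Icc 1 n \ T, (arcCode n T A i - 1) := by
  rw [G.cr2_eq_sum_crossingsAt]
  refine sum_congr rfl fun i hi => ?_
  rw [arcCode, if_pos hi, Nat.add_sub_cancel]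

/-- The right endpoint of the arc from `w` is the free endpoint whose rank is given by the code. -/
lemma mem_of_filter_eq_of_arcCode_eq (G : IsArcDiagram n S T A) (G' : IsArcDiagram n S T A')
    {w v : ℕ} (habove : {e ∈ A | w < e.1} = {e ∈ A' | w < e.1})
    (hcode : arcCode n T A w = arcCode n T A' w) (hwv : (w, v) ∈ A) : (w, v) ∈ A' := by
  have hw := G.fst_mem_sdiff hwv
  obtain ⟨v', hwv'⟩ := (G'.exists_arc_from_iff w (mem_sdiff.1 hw).1).2 (mem_sdiff.1 hw).2
  have hfree : freeEnds n S A w = freeEnds n S A' w := by rw [freeEnds, freeEnds, habove]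
  have hrank : #{x ∈ freeEnds n S A w | x < v} = #{x ∈ freeEnds n S A w | x < v'} := by
    rw [← G.crossingsAt_eq_card hwv, hfree, ← G'.crossingsAt_eq_card hwv']
    simpa only [arcCode, if_pos hw, Nat.add_right_cancel_iff] using hcode
  rwa [(freeEnds n S A w).strictMonoOn_card_filter_lt.injOn (G.mem_freeEnds hwv)
    (hfree ▸ G'.mem_freeEnds hwv') hrank]

lemma filter_lt_fst_eq_empty (G : IsArcDiagram n S T A) {w : ℕ} (hw : n ≤ w) :
    {e ∈ A | w < e.1} = ∅ :=
  filter_eq_empty_iff.2 fun e he h => h.not_ge ((mem_Icc.1 (G.fst_mem e he)).2.trans hw)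

theorem filter_lt_fst_eq_of_arcCode_eq (G : IsArcDiagram n S T A) (G' : IsArcDiagram n S T A')
    (h : arcCode n T A = arcCode n T A') (w : ℕ) :
    {e ∈ A | w < e.1} = {e ∈ A' | w < e.1} := by
  by_cases hw : n ≤ w
  · rw [G.filter_lt_fst_eq_empty hw, G'.filter_lt_fst_eq_empty hw]
  have ih := filter_lt_fst_eq_of_arcCode_eq G G' h (w + 1)
  ext ⟨a, b⟩
  simp only [mem_filter, and_congr_left_iff]
  intro hwa
  rcases (Nat.succ_le_of_lt hwa).lt_or_eq with hlt | rfl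
  · simpa only [mem_filter, hlt, and_true] using Finset.ext_iff.1 ih (a, b)
  · exact ⟨G.mem_of_filter_eq_of_arcCode_eq G' ih (congrFun h _),
      G'.mem_of_filter_eq_of_arcCode_eq G ih.symm (congrFun h _).symm⟩
termination_by n - w

theorem eq_of_arcCode_eq (G : IsArcDiagram n S T A) (G' : IsArcDiagram n S T A')
    (h : arcCode n T A = arcCode n T A') : A = A' := by
  have hpos : ∀ {B}, IsArcDiagram n S T B → {e ∈ B | 0 < e.1} = B := fun G =>
    filter_true_of_mem fun e he => (mem_Icc.1 (G.fst_mem e he)).1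
  rw [← hpos G, ← hpos G', G.filter_lt_fst_eq_of_arcCode_eq G' h]

end IsArcDiagram

lemma freeEnds_insert {n : ℕ} {S : Finset ℕ} {B : Finset (ℕ × ℕ)} {u v w : ℕ} (huw : u ≤ w) :
    freeEnds n S (insert (u, v) B) w = freeEnds n S B w := by
  rw [freeEnds, freeEnds, filter_insert, if_neg huw.not_gt]

/-- The arcs starting after `i` of an arc diagram of `pnST n S T`. -/
structure IsUpperArcDiagram (n : ℕ) (S T : Finset ℕ) (i : ℕ) (B : Finset (ℕ × ℕ)) : Prop where
  lt_fst : ∀ e ∈ B, i < e.1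
  fst_lt_snd : ∀ e ∈ B, e.1 < e.2
  snd_mem : ∀ e ∈ B, e.2 ∈ Icc 1 n \ S
  leftUnique : Relator.LeftUnique (IsArc B)
  rightUnique : Relator.RightUnique (IsArc B)
  exists_arc_from_iff : ∀ u ∈ Icc (i + 1) n, (∃ v, (u, v) ∈ B) ↔ u ∉ T

namespace IsUpperArcDiagram

variable {n : ℕ} {S T : Finset ℕ} {i : ℕ} {B : Finset (ℕ × ℕ)}

lemma empty : IsUpperArcDiagram n S T n ∅ :=
  ⟨by simp, by simp, by simp, fun _ _ _ h => absurd h (notMem_empty _),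
    fun _ _ _ h => absurd h (notMem_empty _), fun u hu => by have := mem_Icc.1 hu; omega⟩

lemma of_mem (D : IsUpperArcDiagram n S T (i + 1) B) (hi : i + 1 ∈ T) :
    IsUpperArcDiagram n S T i B := by
  refine ⟨fun e he => (D.lt_fst e he).trans' (Nat.lt_succ_self i), D.fst_lt_snd, D.snd_mem,
    D.leftUnique, D.rightUnique, fun u hu => ?_⟩
  rcases (mem_Icc.1 hu).1.eq_or_lt with rfl | hlt
  · exact ⟨fun ⟨v, hv⟩ => absurd (D.lt_fst _ hv) (lt_irrefl _), fun h => absurd hi h⟩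
  · exact D.exists_arc_from_iff u (mem_Icc.2 ⟨hlt, (mem_Icc.1 hu).2⟩)

lemma insert_of_mem_freeEnds (D : IsUpperArcDiagram n S T (i + 1) B) {v : ℕ}
    (hv : v ∈ freeEnds n S B (i + 1)) (hi : i + 1 ∉ T) :
    IsUpperArcDiagram n S T i (insert (i + 1, v) B) := by
  have hB : {e ∈ B | i + 1 < e.1} = B := filter_true_of_mem D.lt_fst
  rw [freeEnds, hB] at hv
  simp only [mem_sdiff, mem_Icc] at hv
  obtain ⟨⟨hv, hvS⟩, hvB⟩ := hv
  have hfst : ∀ e ∈ B, e.1 ≠ i + 1 := fun e he => (D.lt_fst e he).ne'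
  have hsnd : ∀ e ∈ B, e.2 ≠ v := fun e he h => hvB (mem_image.2 ⟨e, he, h⟩)
  refine ⟨?_, ?_, ?_, fun a b c ha hb => ?_, fun a b c hb hc => ?_, fun u hu => ?_⟩
  · simp only [mem_insert, forall_eq_or_imp]
    exact ⟨Nat.lt_succ_self i, fun e he => (D.lt_fst e he).trans' (Nat.lt_succ_self i)⟩
  · simp only [mem_insert, forall_eq_or_imp]
    exact ⟨by omega, D.fst_lt_snd⟩
  · simp only [mem_insert, forall_eq_or_imp]
    exact ⟨mem_sdiff.2 ⟨mem_Icc.2 ⟨by omega, hv.2⟩, hvS⟩, D.snd_mem⟩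
  · simp only [IsArc, mem_insert, Prod.mk.injEq] at ha hb
    rcases ha with ⟨rfl, rfl⟩ | ha <;> rcases hb with ⟨rfl, hc⟩ | hb
    · rfl
    · exact absurd rfl (hsnd _ hb)
    · exact absurd hc (hsnd _ ha)
    · exact D.leftUnique ha hb
  · simp only [IsArc, mem_insert, Prod.mk.injEq] at hb hc
    rcases hb with ⟨rfl, rfl⟩ | hb <;> rcases hc with ⟨ha, rfl⟩ | hc
    · rfl
    · exact absurd rfl (hfst _ hc)
    · exact absurd ha (hfst _ hb)
    · exact D.rightUnique hb hc
  · rcases (mem_Icc.1 hu).1.eq_or_lt with rfl | hlt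
    · exact ⟨fun _ => hi, fun _ => ⟨v, mem_insert_self _ _⟩⟩
    · rw [← D.exists_arc_from_iff u (mem_Icc.2 ⟨hlt, (mem_Icc.1 hu).2⟩)]
      simp only [mem_insert, Prod.mk.injEq]
      exact exists_congr fun w => or_iff_right fun h => hlt.ne' h.1

lemma fst_mem (D : IsUpperArcDiagram n S T i B) {e : ℕ × ℕ} (he : e ∈ B) :
    e.1 ∈ Icc (i + 1) n :=
  mem_Icc.2 ⟨D.lt_fst e he,
    ((D.fst_lt_snd e he).trans_le (mem_Icc.1 (mem_sdiff.1 (D.snd_mem e he)).1).2).le⟩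

lemma card_eq (D : IsUpperArcDiagram n S T i B) : #B = #(Icc (i + 1) n \ T) := by
  rw [← card_image_of_injOn (injOn_fst_of_rightUnique D.rightUnique)]
  congr 1
  ext u
  simp only [mem_image, mem_sdiff, mem_Icc]
  constructor
  · rintro ⟨e, he, rfl⟩
    exact ⟨mem_Icc.1 (D.fst_mem he), (D.exists_arc_from_iff _ (D.fst_mem he)).1 ⟨e.2, he⟩⟩
  · rintro ⟨hu, huT⟩
    obtain ⟨v, hv⟩ := (D.exists_arc_from_iff u (mem_Icc.2 hu)).2 huT
    exact ⟨(u, v), hv, rfl⟩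

lemma card_freeEnds (D : IsUpperArcDiagram n S T i B) : #(freeEnds n S B i) = hST n S T i := by
  have hsub : B.image Prod.snd ⊆ Icc (i + 1) n \ S := by
    rintro _ hx
    obtain ⟨e, he, rfl⟩ := mem_image.1 hx
    obtain ⟨hmem, hvS⟩ := mem_sdiff.1 (D.snd_mem e he)
    have h₁ := (mem_Icc.1 (D.fst_mem he)).1
    have h₂ := D.fst_lt_snd e he
    exact mem_sdiff.2 ⟨mem_Icc.2 ⟨by omega, (mem_Icc.1 hmem).2⟩, hvS⟩
  have hinj : #(B.image Prod.snd) = #B := card_image_of_injOn (injOn_snd_of_leftUnique D.leftUnique)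
  have hS' := card_sdiff_add_card_inter (Icc (i + 1) n) S
  have hT' := card_sdiff_add_card_inter (Icc (i + 1) n) T
  have hle := card_le_card hsub
  rw [inter_comm] at hS' hT'
  rw [freeEnds, filter_true_of_mem D.lt_fst, card_sdiff_of_subset hsub, hinj, D.card_eq, hST]
  omega

theorem isArcDiagram (D : IsUpperArcDiagram n S T 0 B) (hS : S ⊆ Icc 1 n) (hT : T ⊆ Icc 1 n)
    (hcard : #S = #T) : IsArcDiagram n S T B := by
  have himage : B.image Prod.snd = Icc 1 n \ S := by
    refine eq_of_subset_of_card_le (fun _ hx => ?_) ?_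
    · obtain ⟨e, he, rfl⟩ := mem_image.1 hx
      exact D.snd_mem e he
    · rw [card_image_of_injOn (injOn_snd_of_leftUnique D.leftUnique), D.card_eq,
        card_sdiff_of_subset hS, card_sdiff_of_subset hT, hcard]
  refine ⟨fun e he => D.fst_mem he, fun e he => (mem_sdiff.1 (D.snd_mem e he)).1, D.fst_lt_snd,
    D.leftUnique, D.rightUnique, D.exists_arc_from_iff, fun j hj => ?_⟩
  rw [← (mem_sdiff.trans (and_iff_right hj)), ← himage, mem_image]
  exact ⟨fun ⟨u, hu⟩ => ⟨(u, j), hu, rfl⟩, fun ⟨e, he, hej⟩ => ⟨e.1, hej ▸ he⟩⟩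

variable {a : ℕ → ℕ}

theorem exists_freeEnds_rank_eq (ha : ∀ i ∈ Icc 1 n \ T, 1 ≤ a i ∧ a i ≤ hST n S T i) (i : ℕ)
    (hi : i ≤ n) : ∃ B, IsUpperArcDiagram n S T i B ∧
      ∀ u v, (u, v) ∈ B → #{x ∈ freeEnds n S B u | x < v} + 1 = a u := by
  rcases hi.eq_or_lt with rfl | hi
  · exact ⟨∅, empty, by simp⟩
  obtain ⟨B, D, hB⟩ := exists_freeEnds_rank_eq ha (i + 1) hi
  by_cases hiT : i + 1 ∈ T
  · exact ⟨B, D.of_mem hiT, hB⟩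
  have hai := ha (i + 1) (mem_sdiff.2 ⟨mem_Icc.2 ⟨by omega, hi⟩, hiT⟩)
  obtain ⟨v, hv, hrank⟩ := exists_card_filter_lt_eq (s := freeEnds n S B (i + 1))
    (r := a (i + 1) - 1) (by rw [D.card_freeEnds]; omega)
  refine ⟨insert (i + 1, v) B, D.insert_of_mem_freeEnds hv hiT, fun u w huw => ?_⟩
  rcases mem_insert.1 huw with h | h
  · obtain ⟨rfl, rfl⟩ := Prod.mk.inj h
    rw [freeEnds_insert le_rfl, hrank]
    omega
  · rw [freeEnds_insert (D.lt_fst _ h).le, hB u w h]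
termination_by n - i

end IsUpperArcDiagram

def IsAdmissibleSeq (n : ℕ) (S T : Finset ℕ) (a : ℕ → ℕ) : Prop :=
  (∀ i ∈ Icc 1 n \ T, 1 ≤ a i ∧ a i ≤ hST n S T i) ∧ ∀ i, i ∉ Icc 1 n \ T → a i = 0

section Code

variable {n : ℕ} {S T : Finset ℕ}

lemma IsArcDiagram.isAdmissibleSeq_arcCode {A : Finset (ℕ × ℕ)} (G : IsArcDiagram n S T A) :
    IsAdmissibleSeq n S T (arcCode n T A) :=
  ⟨fun _ hi => mem_Icc.1 (G.arcCode_mem_Icc hi), fun _ hi => if_neg hi⟩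

theorem exists_isArcDiagram_arcCode_eq (hS : S ⊆ Icc 1 n) (hT : T ⊆ Icc 1 n) (hcard : #S = #T)
    {a : ℕ → ℕ} (ha : IsAdmissibleSeq n S T a) :
    ∃ A, IsArcDiagram n S T A ∧ arcCode n T A = a := by
  obtain ⟨A, D, hA⟩ := IsUpperArcDiagram.exists_freeEnds_rank_eq ha.1 0 (Nat.zero_le n)
  have G := D.isArcDiagram hS hT hcard
  refine ⟨A, G, funext fun i => ?_⟩
  by_cases hi : i ∈ Icc 1 n \ T
  · obtain ⟨j, hij⟩ := (G.exists_arc_from_iff i (mem_sdiff.1 hi).1).2 (mem_sdiff.1 hi).2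
    rw [arcCode, if_pos hi, G.crossingsAt_eq_card hij, hA i j hij]
  · rw [arcCode, if_neg hi, ha.2 i hi]

noncomputable def arcDiagramEquivAdmissibleSeq (hS : S ⊆ Icc 1 n) (hT : T ⊆ Icc 1 n)
    (hcard : #S = #T) : {A // IsArcDiagram n S T A} ≃ {a // IsAdmissibleSeq n S T a} :=
  Equiv.ofBijective (fun A => ⟨arcCode n T A.1, A.2.isAdmissibleSeq_arcCode⟩)
    ⟨fun A A' h => Subtype.ext (A.2.eq_of_arcCode_eq A'.2 (congrArg Subtype.val h)),
      fun a => let ⟨A, G, hA⟩ := exists_isArcDiagram_arcCode_eq hS hT hcard a.2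
        ⟨⟨A, G⟩, Subtype.ext hA⟩⟩

end Code

theorem pnST_bij_sequences (n : ℕ) (S T : Finset ℕ)
    (hS : S ⊆ Finset.Icc 1 n) (hT : T ⊆ Finset.Icc 1 n) (hcard : S.card = T.card) :
    ∃ e : {P // P ∈ pnST n S T} ≃
        {a : ℕ → ℕ // (∀ i ∈ Finset.Icc 1 n \ T, 1 ≤ a i ∧ a i ≤ hST n S T i) ∧
          (∀ i, i ∉ Finset.Icc 1 n \ T → a i = 0)},
      ∀ P : {P // P ∈ pnST n S T},
        cr2 (arcsOf P.val) = ∑ i ∈ Finset.Icc 1 n \ T, ((e P).val i - 1) := by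
  exact ⟨(pnSTEquivArcDiagram hS hT).trans (arcDiagramEquivAdmissibleSeq hS hT hcard),
    fun P => (isArcDiagram_arcsOf P.2).cr2_eq_sum_arcCode_sub_one⟩
end

section
/- Fix S, T ⊆ [n] with |S| = |T|. Define a lattice path L(S,T) from (0,0) with two steps for each i = 1,…,n in order: if i ∈ S∩T, steps (1,0),(1,0); if i ∈ S\T, steps (1,0),(1,1); if i ∈ T\S, steps (1,−1),(1,0); if i ∉ S∪T, steps (1,−1),(1,1). Then P_n(S,T) is nonempty if and only if L(S,T) never goes below the x-axis. -/
open Finset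
open scoped Classical

/-- major index of a permutation of [n], via its word π(1)…π(n) -/
def majPerm {n : ℕ} (π : Equiv.Perm (Fin n)) : ℕ := majList (List.ofFn (fun i => (π i : ℕ) + 1))

/-- inversion number of a permutation of [n] -/
def invPerm {n : ℕ} (π : Equiv.Perm (Fin n)) : ℕ := invList (List.ofFn (fun i => (π i : ℕ) + 1))

/-- the matching M_π of [2m] with arcs (m+1-π(i), i+m) for 1 ≤ i ≤ m -/
def Mpi (m : ℕ) (π : Equiv.Perm (Fin m)) : Finset (ℕ × ℕ) :=
  Finset.univ.image (fun i : Fin m => (m + 1 - ((π i : ℕ) + 1), ((i : ℕ) + 1) + m))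

/-- vertical displacement of the k-th step (k = 1,…,2n) of the lattice path L(S,T):
the two steps for vertex i are steps 2i-1 and 2i; the first step goes down unless i ∈ S,
the second goes up unless i ∈ T. -/
def stepDelta (S T : Finset ℕ) (k : ℕ) : ℤ :=
  if k % 2 = 1 then (if (k + 1) / 2 ∈ S then 0 else -1) else (if k / 2 ∈ T then 0 else 1)

/-- the height (y-coordinate) of the lattice path L(S,T) after k steps -/
def pathHt (S T : Finset ℕ) (k : ℕ) : ℤ := ∑ j ∈ Finset.Icc 1 k, stepDelta S T j

/-!
If `P ∈ P_n(S,T)`, sending each maximum to the minimum of its block injects the maxima in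
`[1,i]` into the minima in `[1,i]`, and misses the minimum of the block of `i+1` when `i+1` is
not itself a minimum; this is nonnegativity of the path at step `2i+1`, and the even steps only go
up. Conversely, scan `1,…,n`: a minimum opens a block, any other element joins an open block
(one exists exactly when the path stays nonnegative), and a maximum closes the block it joins.
Since `|S| = |T|` no block is left open at the end.
-/

section BlockMinMax

variable {n : ℕ}

lemma mem_minsetOf_iff (P : Finpartition (Icc 1 n)) {i : ℕ} :
    i ∈ minsetOf P ↔ i ∈ Icc 1 n ∧ ∀ j ∈ P.part i, i ≤ j := by
  rw [minsetOf, mem_filter]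
  refine and_congr_right fun hi => ⟨?_, fun h => ⟨_, P.part_mem.2 hi, P.mem_part hi, h⟩⟩
  rintro ⟨B, hB, hiB, hmin⟩
  rwa [P.part_eq_of_mem hB hiB]

lemma mem_maxsetOf_iff (P : Finpartition (Icc 1 n)) {i : ℕ} :
    i ∈ maxsetOf P ↔ i ∈ Icc 1 n ∧ ∀ j ∈ P.part i, j ≤ i := by
  rw [maxsetOf, mem_filter]
  refine and_congr_right fun hi => ⟨?_, fun h => ⟨_, P.part_mem.2 hi, P.mem_part hi, h⟩⟩
  rintro ⟨B, hB, hiB, hmax⟩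
  rwa [P.part_eq_of_mem hB hiB]

noncomputable def blockMin (P : Finpartition (Icc 1 n)) (i : ℕ) : ℕ := sInf (P.part i : Set ℕ)

lemma blockMin_mem_part (P : Finpartition (Icc 1 n)) {i : ℕ} (hi : i ∈ Icc 1 n) :
    blockMin P i ∈ P.part i :=
  Nat.sInf_mem ⟨i, P.mem_part hi⟩

lemma blockMin_le (P : Finpartition (Icc 1 n)) {i j : ℕ} (hj : j ∈ P.part i) : blockMin P i ≤ j :=
  Nat.sInf_le hj

lemma part_blockMin (P : Finpartition (Icc 1 n)) {i : ℕ} (hi : i ∈ Icc 1 n) :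
    P.part (blockMin P i) = P.part i :=
  P.part_eq_of_mem (P.part_mem.2 hi) (blockMin_mem_part P hi)

lemma blockMin_mem_minsetOf (P : Finpartition (Icc 1 n)) {i : ℕ} (hi : i ∈ Icc 1 n) :
    blockMin P i ∈ minsetOf P := by
  rw [mem_minsetOf_iff, part_blockMin P hi]
  exact ⟨P.part_subset i (blockMin_mem_part P hi), fun j hj => blockMin_le P hj⟩

lemma le_of_blockMin_eq (P : Finpartition (Icc 1 n)) {t j : ℕ} (ht : t ∈ maxsetOf P)
    (hj : j ∈ Icc 1 n) (h : blockMin P j = blockMin P t) : j ≤ t := by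
  rw [mem_maxsetOf_iff] at ht
  refine ht.2 j ?_
  rw [← part_blockMin P ht.1, ← h, part_blockMin P hj]
  exact P.mem_part hj

end BlockMinMax

def prefixCount (A : Finset ℕ) (i : ℕ) : ℕ := #(A ∩ Icc 1 i)

def BallotCondition (n : ℕ) (S T : Finset ℕ) : Prop :=
  ∀ i < n, prefixCount T i + (if i + 1 ∈ S then 0 else 1) ≤ prefixCount S i

lemma prefixCount_succ (A : Finset ℕ) (i : ℕ) :
    prefixCount A (i + 1) = prefixCount A i + if i + 1 ∈ A then 1 else 0 := by
  rw [prefixCount, prefixCount, ← insert_Icc_right_eq_Icc_add_one (by omega)]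
  split_ifs with h
  · rw [inter_insert_of_mem h, card_insert_of_notMem (by simp)]
  · rw [inter_insert_of_notMem h, add_zero]

lemma ballotCondition_minsetOf_maxsetOf {n : ℕ} (P : Finpartition (Icc 1 n)) :
    BallotCondition n (minsetOf P) (maxsetOf P) := by
  intro i hi
  have hi1 : i + 1 ∈ Icc 1 n := mem_Icc.2 ⟨by omega, hi⟩
  set m := blockMin P (i + 1)
  have hcard : prefixCount (maxsetOf P) i ≤ #((minsetOf P ∩ Icc 1 i).erase m) := by
    refine card_le_card_of_injOn (blockMin P) (fun t ht => ?_) (fun t₁ ht₁ t₂ ht₂ h => ?_)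
    · obtain ⟨htT, ht⟩ := mem_inter.1 ht
      have htn := ((mem_maxsetOf_iff P).1 htT).1
      have hle := blockMin_le P (P.mem_part htn)
      have hpos := (mem_Icc.1 (P.part_subset t (blockMin_mem_part P htn))).1
      refine mem_erase.2 ⟨fun h => ?_, mem_inter.2 ⟨blockMin_mem_minsetOf P htn, ?_⟩⟩
      · have := le_of_blockMin_eq P htT hi1 h.symm
        simp only [mem_Icc] at ht
        omega
      · simp only [mem_Icc] at ht ⊢
        omega
    · have h₁ := (mem_inter.1 ht₁).1
      have h₂ := (mem_inter.1 ht₂).1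
      exact le_antisymm (le_of_blockMin_eq P h₂ ((mem_maxsetOf_iff P).1 h₁).1 h)
        (le_of_blockMin_eq P h₁ ((mem_maxsetOf_iff P).1 h₂).1 h.symm)
  split_ifs with hmin
  · exact hcard.trans card_erase_le
  · have hm : m ∈ minsetOf P ∩ Icc 1 i := by
      have hle := blockMin_le P (P.mem_part hi1)
      have hpos := (mem_Icc.1 (P.part_subset _ (blockMin_mem_part P hi1))).1
      have hne : m ≠ i + 1 := fun h => hmin (h ▸ blockMin_mem_minsetOf P hi1)
      exact mem_inter.2 ⟨blockMin_mem_minsetOf P hi1, mem_Icc.2 ⟨hpos, by omega⟩⟩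
    have := card_erase_add_one hm
    unfold prefixCount at hcard ⊢
    omega

section LatticePath

variable (S T : Finset ℕ)

lemma pathHt_succ (k : ℕ) : pathHt S T (k + 1) = pathHt S T k + stepDelta S T (k + 1) :=
  sum_Icc_succ_top (by omega) _

lemma stepDelta_odd (i : ℕ) : stepDelta S T (2 * i + 1) = if i + 1 ∈ S then 0 else -1 := by
  rw [stepDelta, if_pos (by omega), show (2 * i + 1 + 1) / 2 = i + 1 by omega]

lemma stepDelta_even (i : ℕ) : stepDelta S T (2 * i + 2) = if i + 1 ∈ T then 0 else 1 := by
  rw [stepDelta, if_neg (by omega), show (2 * i + 2) / 2 = i + 1 by omega]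

lemma pathHt_two_mul_add_one (i : ℕ) :
    pathHt S T (2 * i + 1) =
      (prefixCount S i : ℤ) - prefixCount T i - if i + 1 ∈ S then 0 else 1 := by
  induction i with
  | zero =>
    simp only [pathHt, prefixCount, Nat.mul_zero, zero_add, Icc_self, sum_singleton,
      show stepDelta S T 1 = _ from stepDelta_odd S T 0]
    split_ifs <;> simp
  | succ i ih =>
    rw [show 2 * (i + 1) + 1 = 2 * i + 1 + 1 + 1 by ring, pathHt_succ, pathHt_succ, ih,
      stepDelta_even, show 2 * i + 1 + 1 + 1 = 2 * (i + 1) + 1 by ring, stepDelta_odd,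
      prefixCount_succ, prefixCount_succ]
    split_ifs <;> push_cast <;> ring

lemma pathHt_nonneg_iff (n : ℕ) :
    (∀ k ≤ 2 * n, 0 ≤ pathHt S T k) ↔ BallotCondition n S T := by
  have hodd (i : ℕ) : 0 ≤ pathHt S T (2 * i + 1) ↔
      prefixCount T i + (if i + 1 ∈ S then 0 else 1) ≤ prefixCount S i := by
    rw [pathHt_two_mul_add_one]
    split_ifs <;> omega
  refine ⟨fun h i hi => (hodd i).1 (h _ (by omega)), fun h k hk => ?_⟩
  obtain ⟨i, rfl | rfl⟩ | rfl : (∃ i, k = 2 * i + 1 ∨ k = 2 * i + 2) ∨ k = 0 := by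
    rcases k with _ | k
    · exact .inr rfl
    · obtain ⟨i, rfl | rfl⟩ := Nat.even_or_odd' k
      exacts [.inl ⟨i, .inl rfl⟩, .inl ⟨i, .inr rfl⟩]
  · exact (hodd i).2 (h i (by omega))
  · rw [pathHt_succ, stepDelta_even]
    have := (hodd i).2 (h i (by omega))
    split_ifs <;> omega
  · simp [pathHt]

end LatticePath

lemma exists_ge_lt_and_not_succ {P : ℕ → Prop} {i n : ℕ} (hi : P i) (hn : ¬P n) (hin : i ≤ n) :
    ∃ j, i ≤ j ∧ j < n ∧ P j ∧ ¬P (j + 1) := by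
  induction n, hin using Nat.le_induction with
  | base => exact absurd hi hn
  | succ n hin ih =>
    by_cases h : P n
    · exact ⟨n, hin, n.lt_add_one, h, hn⟩
    · obtain ⟨j, hij, hjn, hj, hj'⟩ := ih h
      exact ⟨j, hij, by omega, hj, hj'⟩

section Construction

/-- The minima of the blocks still open after scanning `1, …, i`. Each `i` joins the open block
with the largest minimum, which is its own new block when `i ∈ S`. -/
def openBlocks (S T : Finset ℕ) : ℕ → Finset ℕ
  | 0 => ∅
  | i + 1 =>
    let c := openBlocks S T i ∪ S ∩ {i + 1}
    if i + 1 ∈ T then c.erase (c.sup id) else c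

def joinable (S T : Finset ℕ) (i : ℕ) : Finset ℕ := openBlocks S T (i - 1) ∪ S ∩ {i}

def blockRep (S T : Finset ℕ) (i : ℕ) : ℕ := (joinable S T i).sup id

variable {S T : Finset ℕ}

lemma joinable_succ (i : ℕ) : joinable S T (i + 1) = openBlocks S T i ∪ S ∩ {i + 1} := rfl

lemma openBlocks_succ (i : ℕ) :
    openBlocks S T (i + 1) =
      if i + 1 ∈ T then (joinable S T (i + 1)).erase (blockRep S T (i + 1))
      else joinable S T (i + 1) := rfl

lemma openBlocks_succ_subset (i : ℕ) : openBlocks S T (i + 1) ⊆ joinable S T (i + 1) := by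
  rw [openBlocks_succ]
  split_ifs
  exacts [erase_subset _ _, subset_rfl]

lemma openBlocks_subset (i : ℕ) : openBlocks S T i ⊆ S ∩ Iic i := by
  induction i with
  | zero => simp [openBlocks]
  | succ i ih =>
    exact (openBlocks_succ_subset i).trans <| union_subset
      (ih.trans (inter_subset_inter_left (Iic_subset_Iic.2 (by omega))))
      (inter_subset_inter_left (by simp))

lemma joinable_subset (i : ℕ) : joinable S T i ⊆ S ∩ Iic i :=
  union_subset
    ((openBlocks_subset _).trans (inter_subset_inter_left (Iic_subset_Iic.2 (by omega))))
    (inter_subset_inter_left (by simp))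

lemma blockRep_le (i : ℕ) : blockRep S T i ≤ i :=
  Finset.sup_le fun _ hm => mem_Iic.1 (mem_inter.1 (joinable_subset i hm)).2

lemma blockRep_mem_joinable {i : ℕ} (h : (joinable S T i).Nonempty) :
    blockRep S T i ∈ joinable S T i := by
  obtain ⟨m, hm, he⟩ := exists_mem_eq_sup _ h id
  rw [blockRep, he]
  exact hm

lemma blockRep_of_mem {i : ℕ} (hi : i ∈ S) : blockRep S T i = i :=
  le_antisymm (blockRep_le i) (le_sup (f := id) (mem_union_right _ (by simpa using hi)))

lemma card_joinable_succ (i : ℕ) :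
    #(joinable S T (i + 1)) = #(openBlocks S T i) + if i + 1 ∈ S then 1 else 0 := by
  rw [joinable_succ, card_union_of_disjoint]
  · split_ifs with h <;> simp [h]
  · refine disjoint_left.2 fun m hm hm' => ?_
    have := mem_Iic.1 (mem_inter.1 (openBlocks_subset i hm)).2
    have := mem_singleton.1 (mem_inter.1 hm').2
    omega

lemma card_openBlocks_succ {i : ℕ} (h : (joinable S T (i + 1)).Nonempty) :
    #(openBlocks S T (i + 1)) + (if i + 1 ∈ T then 1 else 0) = #(joinable S T (i + 1)) := by
  rw [openBlocks_succ]
  split_ifs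
  · exact card_erase_add_one (blockRep_mem_joinable h)
  · rfl

lemma joinable_succ_nonempty {i : ℕ}
    (hcard : #(openBlocks S T i) + prefixCount T i = prefixCount S i)
    (hstep : prefixCount T i + (if i + 1 ∈ S then 0 else 1) ≤ prefixCount S i) :
    (joinable S T (i + 1)).Nonempty := by
  rw [← card_pos, card_joinable_succ]
  split_ifs at hstep ⊢ <;> omega

lemma card_openBlocks_add_prefixCount {n : ℕ}
    (hballot : BallotCondition n S T) :
    ∀ i ≤ n, #(openBlocks S T i) + prefixCount T i = prefixCount S i := by
  intro i hi
  induction i with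
  | zero => simp [openBlocks, prefixCount]
  | succ i ih =>
    have ih := ih (by omega)
    have h := card_openBlocks_succ (joinable_succ_nonempty ih (hballot i (by omega)))
    rw [card_joinable_succ] at h
    rw [prefixCount_succ, prefixCount_succ]
    split_ifs at h ⊢ <;> omega

lemma joinable_nonempty {n : ℕ} (hballot : BallotCondition n S T)
    {i : ℕ} (hi : i ∈ Icc 1 n) : (joinable S T i).Nonempty := by
  obtain ⟨i, rfl⟩ : ∃ j, i = j + 1 := ⟨i - 1, by have := (mem_Icc.1 hi).1; omega⟩
  have hi := (mem_Icc.1 hi).2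
  exact joinable_succ_nonempty (card_openBlocks_add_prefixCount hballot i (by omega))
    (hballot i (by omega))

lemma blockRep_mem {n : ℕ} (hballot : BallotCondition n S T)
    {i : ℕ} (hi : i ∈ Icc 1 n) : blockRep S T i ∈ S :=
  (mem_inter.1 (joinable_subset i (blockRep_mem_joinable (joinable_nonempty hballot hi)))).1

lemma notMem_openBlocks_of_le {m t j : ℕ} (hmt : m ≤ t) (hm : m ∉ openBlocks S T t)
    (htj : t ≤ j) : m ∉ openBlocks S T j := by
  induction j, htj using Nat.le_induction with
  | base => exact hm
  | succ j htj ih =>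
    intro h
    rcases mem_union.1 (openBlocks_succ_subset j h) with h | h
    · exact ih h
    · have := mem_singleton.1 (mem_inter.1 h).2
      omega

lemma blockRep_notMem_openBlocks {t : ℕ} (ht : t ∈ T) (ht1 : 1 ≤ t) :
    blockRep S T t ∉ openBlocks S T t := by
  obtain ⟨t, rfl⟩ : ∃ j, t = j + 1 := ⟨t - 1, by omega⟩
  rw [openBlocks_succ, if_pos ht]
  exact notMem_erase _ _

lemma le_of_blockRep_eq {n : ℕ} (hballot : BallotCondition n S T)
    {t j : ℕ} (ht : t ∈ T) (ht1 : 1 ≤ t) (hj : j ∈ Icc 1 n)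
    (h : blockRep S T j = blockRep S T t) : j ≤ t := by
  by_contra! htj
  obtain ⟨j, rfl⟩ : ∃ j', j = j' + 1 := ⟨j - 1, by omega⟩
  have hrt := blockRep_le (S := S) (T := T) t
  have hmem := blockRep_mem_joinable (joinable_nonempty hballot hj)
  rw [h, joinable_succ] at hmem
  rcases mem_union.1 hmem with hmem | hmem
  · exact notMem_openBlocks_of_le hrt (blockRep_notMem_openBlocks ht ht1) (by omega) hmem
  · have := mem_singleton.1 (mem_inter.1 hmem).2
    omega

lemma exists_gt_blockRep_eq {n : ℕ} (hballot : BallotCondition n S T)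
    (hempty : openBlocks S T n = ∅) {i : ℕ} (hi : i ∈ Icc 1 n) (hiT : i ∉ T) :
    ∃ j ∈ Icc 1 n, i < j ∧ blockRep S T j = blockRep S T i := by
  set m := blockRep S T i
  have hm : m ∈ openBlocks S T i := by
    obtain ⟨i, rfl⟩ : ∃ j, i = j + 1 := ⟨i - 1, by have := (mem_Icc.1 hi).1; omega⟩
    rw [openBlocks_succ, if_neg hiT]
    exact blockRep_mem_joinable (joinable_nonempty hballot hi)
  obtain ⟨j, hij, hjn, hmj, hmj'⟩ := exists_ge_lt_and_not_succ (P := (m ∈ openBlocks S T ·)) hm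
    (by simp [hempty]) (mem_Icc.1 hi).2
  have hjoin : m ∈ joinable S T (j + 1) := mem_union_left _ hmj
  have hjT : j + 1 ∈ T := by
    by_contra hjT
    rw [openBlocks_succ, if_neg hjT] at hmj'
    exact hmj' hjoin
  rw [openBlocks_succ, if_pos hjT] at hmj'
  refine ⟨j + 1, mem_Icc.2 ⟨by omega, hjn⟩, by omega, ?_⟩
  by_contra hne
  exact hmj' (mem_erase.2 ⟨Ne.symm hne, hjoin⟩)

end Construction

section KerPartition

variable {n : ℕ}

noncomputable def kerPartition (n : ℕ) (r : ℕ → ℕ) : Finpartition (Icc 1 n) :=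
  Finpartition.ofSetSetoid (Setoid.ker r) (Icc 1 n)

lemma mem_part_kerPartition {r : ℕ → ℕ} {i j : ℕ} :
    j ∈ (kerPartition n r).part i ↔ i ∈ Icc 1 n ∧ j ∈ Icc 1 n ∧ r i = r j :=
  Finpartition.mem_part_ofSetSetoid_iff_rel _

lemma minsetOf_kerPartition {S : Finset ℕ} {r : ℕ → ℕ} (hS : S ⊆ Icc 1 n)
    (hrS : ∀ i ∈ Icc 1 n, r i ∈ S) (hr_le : ∀ i, r i ≤ i) (hr_self : ∀ s ∈ S, r s = s) :
    minsetOf (kerPartition n r) = S := by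
  ext i
  simp only [mem_minsetOf_iff, mem_part_kerPartition]
  constructor
  · rintro ⟨hi, hmin⟩
    have hri := hrS i hi
    rwa [le_antisymm (hmin (r i) ⟨hi, hS hri, (hr_self _ hri).symm⟩) (hr_le i)]
  · intro hi
    refine ⟨hS hi, fun j ⟨_, _, hij⟩ => ?_⟩
    have := hr_self i hi
    have := hr_le j
    omega

lemma mem_maxsetOf_kerPartition {r : ℕ → ℕ} {i : ℕ} :
    i ∈ maxsetOf (kerPartition n r) ↔ i ∈ Icc 1 n ∧ ∀ j ∈ Icc 1 n, r i = r j → j ≤ i := by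
  simp only [mem_maxsetOf_iff, mem_part_kerPartition]
  grind

end KerPartition

lemma exists_minsetOf_maxsetOf {n : ℕ} {S T : Finset ℕ} (hS : S ⊆ Icc 1 n) (hT : T ⊆ Icc 1 n)
    (hcard : #S = #T) (hballot : BallotCondition n S T) :
    ∃ P : Finpartition (Icc 1 n), minsetOf P = S ∧ maxsetOf P = T := by
  have hempty : openBlocks S T n = ∅ := by
    have h := card_openBlocks_add_prefixCount hballot n le_rfl
    rw [prefixCount, prefixCount, inter_eq_left.2 hS, inter_eq_left.2 hT, hcard] at h
    exact card_eq_zero.1 (by omega)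
  refine ⟨kerPartition n (blockRep S T), minsetOf_kerPartition hS (fun i => blockRep_mem hballot)
    blockRep_le (fun s => blockRep_of_mem), ?_⟩
  ext i
  rw [mem_maxsetOf_kerPartition]
  constructor
  · rintro ⟨hi, hmax⟩
    by_contra hiT
    obtain ⟨j, hj, hij, h⟩ := exists_gt_blockRep_eq hballot hempty hi hiT
    exact absurd (hmax j hj h.symm) (by omega)
  · intro hiT
    exact ⟨hT hiT, fun j hj h => le_of_blockRep_eq hballot hiT (mem_Icc.1 (hT hiT)).1 hj h.symm⟩

theorem pnST_nonempty_iff_motzkin (n : ℕ) (S T : Finset ℕ)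
    (hS : S ⊆ Finset.Icc 1 n) (hT : T ⊆ Finset.Icc 1 n) (hcard : S.card = T.card) :
    (pnST n S T).Nonempty ↔ ∀ k ≤ 2 * n, 0 ≤ pathHt S T k := by
  rw [pathHt_nonneg_iff]
  constructor
  · rintro ⟨P, hP⟩
    obtain ⟨rfl, rfl⟩ := (mem_filter.1 hP).2
    exact ballotCondition_minsetOf_maxsetOf P
  · intro hballot
    obtain ⟨P, hmin, hmax⟩ := exists_minsetOf_maxsetOf hS hT hcard hballot
    exact ⟨P, mem_filter.2 ⟨mem_univ P, hmin, hmax⟩⟩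
end
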